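/- Given a polyhedral model P = (|K|,V) with |K| the polyhedron of a simplicial complex K, if Z ⊆ |K|×|K| is a weak simplicial bisimulation and Z(x₁,x₂), then x₁ and x₂ satisfy exactly the same SLCS_η formulas (i.e., weak simplicial bisimilarity implies ≡_η). -/
import Mathlib


/-- Formulas of SLCS_η over proposition letters `PL`. -/
inductive SLCS (PL : Type*) : Type _
  | ap : PL → SLCS PL
  | neg : SLCS PL → SLCS PL
  | conj : SLCS PL → SLCS PL → SLCS PL
  | eta : SLCS PL → SLCS PL → SLCS PL

/-- Topological satisfaction of SLCS_η on a space `X` with valuation `V`: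
`η(Φ₁,Φ₂)` holds at `x` iff there is a topological path `π` from `x` whose endpoint
satisfies `Φ₂` and with `Φ₁` holding at `π r` for all `r ∈ [0,1)`. -/
def psat {X PL : Type*} [TopologicalSpace X] (V : PL → X → Prop) :
    SLCS PL → X → Prop
  | .ap p, x => V p x
  | .neg φ, x => ¬ psat V φ x
  | .conj φ ψ, x => psat V φ x ∧ psat V ψ x
  | .eta φ ψ, x => ∃ π : unitInterval → X, Continuous π ∧ π 0 = x ∧
      psat V ψ (π 1) ∧ ∀ r : unitInterval, r < 1 → psat V φ (π r)

/-- Weak simplicial bisimulation on a space `X` with valuation `V`. -/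
def IsWSBisim {X PL : Type*} [TopologicalSpace X] (V : PL → X → Prop)
    (Z : X → X → Prop) : Prop :=
  Symmetric Z ∧ ∀ x₁ x₂, Z x₁ x₂ →
    ((∀ p, V p x₁ ↔ V p x₂) ∧
      ∀ π₁ : unitInterval → X, Continuous π₁ → π₁ 0 = x₁ →
        ∃ π₂ : unitInterval → X, Continuous π₂ ∧ π₂ 0 = x₂ ∧ Z (π₁ 1) (π₂ 1) ∧
          ∀ r₂ : unitInterval, r₂ < 1 →
            ∃ r₁ : unitInterval, r₁ < 1 ∧ Z (π₁ r₁) (π₂ r₂))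

/-- The cell (relative interior) of a simplex with vertex set `s`. -/
def cell {m : ℕ} (s : Finset (EuclideanSpace ℝ (Fin m))) :
    Set (EuclideanSpace ℝ (Fin m)) :=
  intrinsicInterior ℝ (convexHull ℝ (s : Set (EuclideanSpace ℝ (Fin m))))

theorem wsbisim_aux {X PL : Type*} [TopologicalSpace X] (V : PL → X → Prop)
    (Z : X → X → Prop) (hZ : IsWSBisim V Z) :
    ∀ Φ : SLCS PL, ∀ y₁ y₂, Z y₁ y₂ → (psat V Φ y₁ ↔ psat V Φ y₂) := by
  obtain ⟨hsym, hstep⟩ := hZ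
  intro Φ
  induction Φ with
  | ap p =>
    intro y₁ y₂ h
    exact (hstep y₁ y₂ h).1 p
  | neg φ ih =>
    intro y₁ y₂ h
    exact not_congr (ih y₁ y₂ h)
  | conj φ ψ ihφ ihψ =>
    intro y₁ y₂ h
    exact and_congr (ihφ y₁ y₂ h) (ihψ y₁ y₂ h)
  | eta φ ψ ihφ ihψ =>
    have dir : ∀ y₁ y₂, Z y₁ y₂ → psat V (.eta φ ψ) y₁ → psat V (.eta φ ψ) y₂ := by
      intro y₁ y₂ h ⟨π₁, hc, h0, hend, hmid⟩
      obtain ⟨π₂, hc₂, h0₂, hZend, hZmid⟩ :=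
        (hstep y₁ y₂ h).2 π₁ hc h0
      refine ⟨π₂, hc₂, h0₂, (ihψ _ _ hZend).mp hend, ?_⟩
      intro r₂ hr₂
      obtain ⟨r₁, hr₁, hZr⟩ := hZmid r₂ hr₂
      exact (ihφ _ _ hZr).mp (hmid r₁ hr₁)
    intro y₁ y₂ h
    exact ⟨dir y₁ y₂ h, dir y₂ y₁ (hsym h)⟩

/-- Lemma: on a polyhedral model `(|K|, V)` (valuations are unions of cells), any weak
simplicial bisimulation relates only points satisfying exactly the same SLCS_η
formulas. -/
theorem wsbisim_implies_eqEta {PL : Type*} {m : ℕ}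
    (K : Geometry.SimplicialComplex ℝ (EuclideanSpace ℝ (Fin m)))
    (V : PL → {x // x ∈ K.space} → Prop)
    (hV : ∀ p, ∀ s ∈ K.faces, ∀ x y : {x // x ∈ K.space},
        (x : EuclideanSpace ℝ (Fin m)) ∈ cell s →
        (y : EuclideanSpace ℝ (Fin m)) ∈ cell s → (V p x ↔ V p y))
    (Z : {x // x ∈ K.space} → {x // x ∈ K.space} → Prop)
    (hZ : IsWSBisim V Z)
    (x₁ x₂ : {x // x ∈ K.space}) (hx : Z x₁ x₂) :
    ∀ Φ : SLCS PL, psat V Φ x₁ ↔ psat V Φ x₂ :=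
  fun Φ => wsbisim_aux V Z hZ Φ x₁ x₂ hx
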